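/- In the polynomial ring 𝔽₅[t₁,…,t₉][x₁₂,x₁₃,x₁₄,x₁₅,x₂₃,x₂₄,x₂₅,x₃₄,x₃₅,x₄₅], let Q = t₁x₁₄² + t₂x₁₅² + t₃x₂₄x₄₅ + t₄x₂₅x₄₅ + t₅x₁₄x₁₅ + t₆x₁₂x₂₃ + t₇x₃₄x₄₅ + t₈x₃₅x₄₅ + t₉x₁₃x₂₃. At the point of 𝔽₅[t₁,…,t₉]¹⁰ with x₁₂ = t₉, x₁₃ = −t₆ and all other coordinates equal to 0: Q vanishes, all five Plücker quadrics q₁,…,q₅ vanish, and all ten partial derivatives ∂Q/∂x_{ij} vanish. (Hence this point of ℙ⁹ is a singular point of Gr(2,5) ∩ {Q = 0} over 𝔽₅(t₁,…,t₉).) -/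

import Mathlib

noncomputable section

open MvPolynomial

/-- The coefficient ring `𝔽₅[t₁,…,t₉]`. -/
abbrev R16 : Type := MvPolynomial (Fin 9) (ZMod 5)

/-- The parameter `tᵢ`, viewed as a constant in
`𝔽₅[t₁,…,t₉][x₁₂,x₁₃,x₁₄,x₁₅,x₂₃,x₂₄,x₂₅,x₃₄,x₃₅,x₄₅]`
(the ten Plücker variables are indexed `0,…,9` in the displayed order). -/
def T16 (i : Fin 9) : MvPolynomial (Fin 10) R16 := C (X i)

/-- `Q = t₁x₁₄² + t₂x₁₅² + t₃x₂₄x₄₅ + t₄x₂₅x₄₅ + t₅x₁₄x₁₅ + t₆x₁₂x₂₃ + t₇x₃₄x₄₅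
  + t₈x₃₅x₄₅ + t₉x₁₃x₂₃`. -/
def Q16 : MvPolynomial (Fin 10) R16 :=
  T16 0 * (X 2 * X 2) + T16 1 * (X 3 * X 3) + T16 2 * (X 5 * X 9) + T16 3 * (X 6 * X 9) +
  T16 4 * (X 2 * X 3) + T16 5 * (X 0 * X 4) + T16 6 * (X 7 * X 9) + T16 7 * (X 8 * X 9) +
  T16 8 * (X 1 * X 4)

/-- The five Plücker quadrics `q₁,…,q₅` in the variables
`x₁₂,x₁₃,x₁₄,x₁₅,x₂₃,x₂₄,x₂₅,x₃₄,x₃₅,x₄₅` (indexed `0,…,9`). -/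
def plucker16 : Fin 5 → MvPolynomial (Fin 10) R16 :=
  ![X 4 * X 9 - X 5 * X 8 + X 6 * X 7,
    X 1 * X 9 - X 2 * X 8 + X 3 * X 7,
    X 0 * X 9 - X 2 * X 6 + X 3 * X 5,
    X 0 * X 8 - X 1 * X 6 + X 3 * X 4,
    X 0 * X 7 - X 1 * X 5 + X 2 * X 4]

/-- The point with `x₁₂ = t₉`, `x₁₃ = −t₆` and all other coordinates zero. -/
def pt16 : Fin 10 → R16 :=
  ![X 8, -(X 5), 0, 0, 0, 0, 0, 0, 0, 0]

/-!
`Q` vanishes to order two at the point: it is `x₂₃ (t₆x₁₂ + t₉x₁₃)` plus terms quadratic in the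
coordinates `x₁₄, …, x₄₅`, and `t₆x₁₂ + t₉x₁₃` vanishes at `x₁₂ = t₉, x₁₃ = −t₆`. So `Q` lies in the
square of the ideal of the point, and by the Leibniz rule its value and all its partial derivatives
vanish there. Every monomial of a Plücker quadric involves one of `x₁₄, …, x₄₅`.
-/

namespace MvPolynomial

variable {σ R : Type*} [CommSemiring R] {a : σ → R} {p : MvPolynomial σ R}

theorem eval_pderiv_eq_zero_of_mem_ker_sq (hp : p ∈ RingHom.ker (eval a) ^ 2) (i : σ) :
    eval a (pderiv i p) = 0 := by
  rw [pow_two] at hp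
  refine Submodule.mul_induction_on hp (fun f hf g hg => ?_) (fun f g hf hg => ?_)
  · rw [RingHom.mem_ker] at hf hg
    simp [Derivation.leibniz, hf, hg]
  · simp [hf, hg]

theorem eval_eq_zero_of_mem_ker_sq (hp : p ∈ RingHom.ker (eval a) ^ 2) : eval a p = 0 :=
  Ideal.pow_le_self two_ne_zero hp

end MvPolynomial

theorem Q16_mem_ker_eval_sq : Q16 ∈ RingHom.ker (eval pt16) ^ 2 := by
  have hQ : Q16 = X 2 * (T16 0 * X 2 + T16 4 * X 3) + X 3 * (T16 1 * X 3) +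
      X 9 * (T16 2 * X 5 + T16 3 * X 6 + T16 6 * X 7 + T16 7 * X 8) +
      X 4 * (T16 5 * X 0 + T16 8 * X 1) := by
    unfold Q16; ring
  rw [hQ, pow_two]
  refine Ideal.add_mem _ (Ideal.add_mem _ (Ideal.add_mem _ ?_ ?_) ?_) ?_ <;>
    exact Ideal.mul_mem_mul (RingHom.mem_ker.mpr (by simp [pt16]))
      (RingHom.mem_ker.mpr (by simp [pt16, T16, mul_comm]))

/-- At the point `x₁₂ = t₉`, `x₁₃ = −t₆` (all other coordinates `0`), the quadric `Q`
of family (2) for `p = 5` vanishes, all five Plücker quadrics vanish, and all ten partial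
derivatives of `Q` vanish: this point is a singular point of `Gr(2,5) ∩ {Q = 0}`. -/
theorem family2_p5_singular_point :
    eval pt16 Q16 = 0 ∧
    (∀ j : Fin 5, eval pt16 (plucker16 j) = 0) ∧
    (∀ i : Fin 10, eval pt16 (pderiv i Q16) = 0) :=
  ⟨eval_eq_zero_of_mem_ker_sq Q16_mem_ker_eval_sq,
    fun j => by fin_cases j <;> simp [plucker16, pt16],
    eval_pderiv_eq_zero_of_mem_ker_sq Q16_mem_ker_eval_sq⟩
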